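/- For any bipartition (ρ;σ) of n, there exists a unique (ρ;σ)~ ∈ Q_n^{B,2} satisfying: (1) (ρ;σ) ≤ (ρ;σ)~ and ρ + σ = μ + ν where (μ;ν) = (ρ;σ)~ (termwise sum of partitions); and (2) (ρ;σ)~ ≤ (τ;υ) for every (τ;υ) ∈ Q_n^{B,2} with (ρ;σ) ≤ (τ;υ). It is constructed by replacing ρ_i, σ_i with ⌈(ρ_i+σ_i)/2⌉ − 1, ⌊(ρ_i+σ_i)/2⌋ + 1 whenever ρ_i < σ_i − 2. -/

import Mathlib

open Finset

/-- Partial sum of the first `k` terms of a sequence of naturals. -/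
def psum (π : ℕ → ℕ) (k : ℕ) : ℕ := ∑ i ∈ Finset.range k, π i

/-- A composition of `n`: almost all terms zero, summing to `n`. -/
def IsComposition (n : ℕ) (π : ℕ → ℕ) : Prop :=
  ∃ N, (∀ i, N ≤ i → π i = 0) ∧ psum π N = n

/-- Dominance order: `l` dominates `π`. -/
def Dominates (l π : ℕ → ℕ) : Prop := ∀ k, psum π k ≤ psum l k

/-- A partition: weakly decreasing sequence. -/
def IsPartition (π : ℕ → ℕ) : Prop := ∀ i, π (i + 1) ≤ π i

/-- A quasi-partition: `π i ≥ π (i+2)` for all `i`. -/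
def IsQuasiPartition (π : ℕ → ℕ) : Prop := ∀ i, π (i + 2) ≤ π i

/-- Interleaving of two sequences: `(ρ₁, σ₁, ρ₂, σ₂, …)` (0-indexed). -/
def interleave (ρ σ : ℕ → ℕ) (i : ℕ) : ℕ :=
  if i % 2 = 0 then ρ (i / 2) else σ (i / 2)

/-- A bipartition of `n`: a pair of partitions whose interleaving sums to `n`. -/
def IsBipartition (n : ℕ) (ρ σ : ℕ → ℕ) : Prop :=
  IsPartition ρ ∧ IsPartition σ ∧ IsComposition n (interleave ρ σ)

/-- Interleaved dominance order on bipartitions: `(ρ;σ) ≤ (μ;ν)`. -/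
def BiLE (ρ σ μ ν : ℕ → ℕ) : Prop :=
  Dominates (interleave μ ν) (interleave ρ σ)

/-- The map `Φ^C` on sequences: replace a consecutive pair `2s < 2t`
by `s+t, s+t` (pointwise description; replacements never overlap for
quasi-partitions). -/
def phiC (π : ℕ → ℕ) : ℕ → ℕ
  | 0 => if π 0 < π 1 then (π 0 + π 1) / 2 else π 0
  | (j + 1) =>
      if π (j + 1) < π (j + 2) then (π (j + 1) + π (j + 2)) / 2
      else if π j < π (j + 1) then (π j + π (j + 1)) / 2
      else π (j + 1)

/-- `Φ^C` of a bipartition: apply `phiC` to the doubled interleaving. -/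
def PhiC (ρ σ : ℕ → ℕ) : ℕ → ℕ := phiC (fun i => 2 * interleave ρ σ i)

/-- Membership in `P^C_{2n}`: partition of `2n` with every odd part of even
multiplicity. -/
def IsPC (n : ℕ) (l : ℕ → ℕ) : Prop :=
  IsPartition l ∧ IsComposition (2 * n) l ∧
    ∀ a : ℕ, Odd a → Even ({i | l i = a}.ncard)

/-- C-distinguished: `μ i ≥ ν i - 1` and `ν i ≥ μ (i+1) - 1`. -/
def QC (μ ν : ℕ → ℕ) : Prop :=
  ∀ i, ν i ≤ μ i + 1 ∧ μ (i + 1) ≤ ν i + 1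

/-- B-distinguished: `μ i ≥ ν i - 2` and `ν i ≥ μ (i+1)`. -/
def QB (μ ν : ℕ → ℕ) : Prop :=
  ∀ i, ν i ≤ μ i + 2 ∧ μ (i + 1) ≤ ν i

/-- Special: `μ i ≥ ν i - 1` and `ν i ≥ μ (i+1)`. -/
def QS (μ ν : ℕ → ℕ) : Prop :=
  ∀ i, ν i ≤ μ i + 1 ∧ μ (i + 1) ≤ ν i

/-- The condition defining `Q_n^{B,2}`: `μ i ≥ ν i - 2`. -/
def QB2 (μ ν : ℕ → ℕ) : Prop := ∀ i, ν i ≤ μ i + 2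

/-- For an antitone sequence, the starting index of the run of equal values
containing index `i`. -/
noncomputable def runStart (l : ℕ → ℕ) (i : ℕ) : ℕ := {j | l i < l j}.ncard

/-- The map `Φ̂^C`, pointwise: halve even parts; replace an (even-length)
maximal run of an odd part `2k+1` with `k, k+1, k, k+1, …`. -/
noncomputable def hphiC (l : ℕ → ℕ) (i : ℕ) : ℕ :=
  if Even (l i) then l i / 2
  else if Even (i - runStart l i) then l i / 2 else l i / 2 + 1

/-- Partial sums of an integer sequence. -/
def zsum (π : ℕ → ℤ) (k : ℕ) : ℤ := ∑ i ∈ Finset.range k, π i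

/-- Dominance order on integer sequences. -/
def ZDominates (l π : ℕ → ℤ) : Prop := ∀ k, zsum π k ≤ zsum l k

/-- The interleaved integer sequence `(2ρ₁+1, 2σ₁−1, 2ρ₂+1, 2σ₂−1, …)`. -/
def interB (ρ σ : ℕ → ℕ) (i : ℕ) : ℤ :=
  if i % 2 = 0 then 2 * (ρ (i / 2) : ℤ) + 1 else 2 * (σ (i / 2) : ℤ) - 1

/-- The map `Φ^B` on integer sequences: replace a consecutive pair `s < t`
by `(s+t)/2, (s+t)/2` (pointwise description). -/
def phiB (π : ℕ → ℤ) : ℕ → ℤ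
  | 0 => if π 0 < π 1 then (π 0 + π 1) / 2 else π 0
  | (j + 1) =>
      if π (j + 1) < π (j + 2) then (π (j + 1) + π (j + 2)) / 2
      else if π j < π (j + 1) then (π j + π (j + 1)) / 2
      else π (j + 1)

/-- `Φ^B` of a bipartition. -/
def PhiB (ρ σ : ℕ → ℕ) : ℕ → ℤ := phiB (interB ρ σ)

/-- Membership in `P^B_{2n+1}` for an integer sequence: nonnegative, weakly
decreasing, summing to `2n+1`, with every (positive) even part of even
multiplicity. -/
def IsPB (n : ℕ) (l : ℕ → ℤ) : Prop :=
  (∀ i, 0 ≤ l i) ∧ (∀ i, l (i + 1) ≤ l i) ∧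
  (∃ N, (∀ i, N ≤ i → l i = 0) ∧ zsum l N = 2 * n + 1) ∧
  ∀ a : ℤ, 0 < a → Even a → Even ({i | l i = a}.ncard)

/-- Membership in `P^B_{2n+1}` for a natural-number partition. -/
def IsPBN (n : ℕ) (l : ℕ → ℕ) : Prop :=
  IsPartition l ∧ IsComposition (2 * n + 1) l ∧
    ∀ a : ℕ, 0 < a → Even a → Even ({i | l i = a}.ncard)

/-- The map `Φ̂^B`, pointwise (0-indexed, so the paper's index `i` is `j+1`):
an odd part `λ_i` becomes `(λ_i + (−1)^i)/2`; a maximal run of an even part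
`2k` starting at (0-indexed) position `s` becomes `k, k, …` if `s` is odd
(paper's `i` even) and `k−1, k+1, k−1, k+1, …` if `s` is even (paper's `i`
odd). -/
noncomputable def hphiB (l : ℕ → ℕ) (j : ℕ) : ℕ :=
  if Odd (l j) then (if Even j then (l j - 1) / 2 else (l j + 1) / 2)
  else
    if Odd (runStart l j) then l j / 2
    else if Even (j - runStart l j) then l j / 2 - 1 else l j / 2 + 1

/-- First component of the special closure `(ρ;σ)°`. -/
def scRho (ρ σ : ℕ → ℕ) : ℕ → ℕ
  | 0 => if ρ 0 + 1 < σ 0 then (ρ 0 + σ 0) / 2 else ρ 0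
  | (i + 1) =>
      if ρ (i + 1) + 1 < σ (i + 1) then (ρ (i + 1) + σ (i + 1)) / 2
      else if σ i < ρ (i + 1) then (σ i + ρ (i + 1)) / 2
      else ρ (i + 1)

/-- Second component of the special closure `(ρ;σ)°`. -/
def scSigma (ρ σ : ℕ → ℕ) (i : ℕ) : ℕ :=
  if ρ i + 1 < σ i then (ρ i + σ i + 1) / 2
  else if σ i < ρ (i + 1) then (σ i + ρ (i + 1) + 1) / 2
  else σ i

/-- First component of the closure `(ρ;σ)~` into `Q_n^{B,2}`. -/
def tRho (ρ σ : ℕ → ℕ) (i : ℕ) : ℕ :=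
  if ρ i + 2 < σ i then (ρ i + σ i + 1) / 2 - 1 else ρ i

/-- Second component of the closure `(ρ;σ)~` into `Q_n^{B,2}`. -/
def tSigma (ρ σ : ℕ → ℕ) (i : ℕ) : ℕ :=
  if ρ i + 2 < σ i then (ρ i + σ i) / 2 + 1 else σ i

/-- First component of the closure `(ρ;σ)^B` into `Q_n^B`. -/
def bRho (ρ σ : ℕ → ℕ) : ℕ → ℕ
  | 0 => if ρ 0 + 2 < σ 0 then (ρ 0 + σ 0 + 1) / 2 - 1 else ρ 0
  | (i + 1) =>
      if ρ (i + 1) + 2 < σ (i + 1) then (ρ (i + 1) + σ (i + 1) + 1) / 2 - 1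
      else if σ i < ρ (i + 1) then (σ i + ρ (i + 1)) / 2
      else ρ (i + 1)

/-- Second component of the closure `(ρ;σ)^B` into `Q_n^B`. -/
def bSigma (ρ σ : ℕ → ℕ) (i : ℕ) : ℕ :=
  if ρ i + 2 < σ i then (ρ i + σ i) / 2 + 1
  else if σ i < ρ (i + 1) then (σ i + ρ (i + 1) + 1) / 2
  else σ i

/-- First component of the closure `(ρ;σ)^C` into `Q_n^C`. -/
def cRho (ρ σ : ℕ → ℕ) : ℕ → ℕ
  | 0 => if ρ 0 + 1 < σ 0 then (ρ 0 + σ 0) / 2 else ρ 0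
  | (i + 1) =>
      if ρ (i + 1) + 1 < σ (i + 1) then (ρ (i + 1) + σ (i + 1)) / 2
      else if σ i + 1 < ρ (i + 1) then (σ i + ρ (i + 1) + 1) / 2
      else ρ (i + 1)

/-- Second component of the closure `(ρ;σ)^C` into `Q_n^C`. -/
def cSigma (ρ σ : ℕ → ℕ) (i : ℕ) : ℕ :=
  if ρ i + 1 < σ i then (ρ i + σ i + 1) / 2
  else if σ i + 1 < ρ (i + 1) then (σ i + ρ (i + 1)) / 2
  else σ i

/-! When `ρ i + σ i = μ i + ν i` for all `i`, the even partial sums of the two interleavings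
agree, so `(ρ;σ) ≤ (μ;ν)` only constrains the odd ones and amounts to `ρ i ≤ μ i`. The closure
`(ρ;σ)~` keeps the termwise sums and raises `ρ i` only where `ρ i + 2 < σ i`, to the least value
allowed by `μ i ≥ ν i - 2`. If `(τ;υ) ∈ Q_n^{B,2}` lies above `(ρ;σ)`, averaging the partial-sum
inequalities at `2i` and `2i + 2` and using `υ i ≤ τ i + 2` shows that it also lies above the
closure at position `2i + 1`. Uniqueness is antisymmetry of dominance. -/

lemma psum_succ (f : ℕ → ℕ) (k : ℕ) : psum f (k + 1) = psum f k + f k :=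
  Finset.sum_range_succ f k

lemma interleave_two_mul (f g : ℕ → ℕ) (m : ℕ) : interleave f g (2 * m) = f m := by
  simp [interleave]

lemma interleave_two_mul_add_one (f g : ℕ → ℕ) (m : ℕ) :
    interleave f g (2 * m + 1) = g m := by
  simp [interleave, Nat.add_mod, Nat.add_div]

lemma psum_interleave_two_mul (f g : ℕ → ℕ) (m : ℕ) :
    psum (interleave f g) (2 * m) = ∑ i ∈ Finset.range m, (f i + g i) := by
  induction m with
  | zero => rfl
  | succ m ih =>
    rw [Nat.mul_succ, psum_succ, psum_succ, ih, interleave_two_mul,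
      interleave_two_mul_add_one, Finset.sum_range_succ, add_assoc]

lemma psum_interleave_two_mul_add_one (f g : ℕ → ℕ) (m : ℕ) :
    psum (interleave f g) (2 * m + 1) = psum (interleave f g) (2 * m) + f m := by
  rw [psum_succ, interleave_two_mul]

lemma psum_eq_of_le_of_forall_eq_zero {f : ℕ → ℕ} {N M : ℕ} (hf : ∀ i, N ≤ i → f i = 0)
    (hNM : N ≤ M) : psum f M = psum f N := by
  induction M, hNM using Nat.le_induction with
  | base => rfl
  | succ M hNM ih => rw [psum_succ, ih, hf M hNM, add_zero]

lemma Dominates.antisymm {l π : ℕ → ℕ} (hlπ : Dominates l π) (hπl : Dominates π l) :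
    l = π := by
  have hpsum : ∀ k, psum l k = psum π k := fun k => le_antisymm (hπl k) (hlπ k)
  funext k
  have := hpsum (k + 1)
  rw [psum_succ, psum_succ, hpsum k] at this
  omega

lemma interleave_injective {f g f' g' : ℕ → ℕ} (h : interleave f g = interleave f' g') :
    f = f' ∧ g = g' := by
  constructor <;> funext m
  · simpa only [interleave_two_mul] using congrFun h (2 * m)
  · simpa only [interleave_two_mul_add_one] using congrFun h (2 * m + 1)

section SameSums

variable {ρ σ μ ν : ℕ → ℕ} (hsum : ∀ i, ρ i + σ i = μ i + ν i)
include hsum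

lemma psum_interleave_two_mul_eq_of_add_eq (m : ℕ) :
    psum (interleave ρ σ) (2 * m) = psum (interleave μ ν) (2 * m) := by
  simp only [psum_interleave_two_mul, hsum]

lemma biLE_of_add_eq_of_le (hle : ∀ i, ρ i ≤ μ i) : BiLE ρ σ μ ν := by
  intro k
  obtain ⟨m, rfl | rfl⟩ := Nat.even_or_odd' k
  · exact (psum_interleave_two_mul_eq_of_add_eq hsum m).le
  · rw [psum_interleave_two_mul_add_one, psum_interleave_two_mul_add_one,
      psum_interleave_two_mul_eq_of_add_eq hsum m]
    exact Nat.add_le_add_left (hle m) _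

lemma IsComposition.interleave_of_add_eq {n : ℕ} (hc : IsComposition n (interleave ρ σ)) :
    IsComposition n (interleave μ ν) := by
  obtain ⟨N, hzero, hN⟩ := hc
  have hzero' : ∀ m, N ≤ m → μ m = 0 ∧ ν m = 0 := by
    intro m hm
    have hρ := hzero (2 * m) (by omega)
    have hσ := hzero (2 * m + 1) (by omega)
    rw [interleave_two_mul] at hρ
    rw [interleave_two_mul_add_one] at hσ
    have := hsum m
    omega
  refine ⟨2 * N, fun i hi => ?_, ?_⟩
  · obtain ⟨m, rfl | rfl⟩ := Nat.even_or_odd' i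
    · rw [interleave_two_mul, (hzero' m (by omega)).1]
    · rw [interleave_two_mul_add_one, (hzero' m (by omega)).2]
  · rw [← psum_interleave_two_mul_eq_of_add_eq hsum,
      psum_eq_of_le_of_forall_eq_zero hzero (by omega), hN]

end SameSums

section Closure

variable (ρ σ : ℕ → ℕ)

lemma tRho_add_tSigma (i : ℕ) : tRho ρ σ i + tSigma ρ σ i = ρ i + σ i := by
  unfold tRho tSigma
  split_ifs <;> omega

lemma le_tRho (i : ℕ) : ρ i ≤ tRho ρ σ i := by
  unfold tRho
  split_ifs <;> omega

lemma qb2_tilde : QB2 (tRho ρ σ) (tSigma ρ σ) := by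
  intro i
  unfold tRho tSigma
  split_ifs <;> omega

variable {ρ σ}

lemma IsBipartition.tilde {n : ℕ} (h : IsBipartition n ρ σ) :
    IsBipartition n (tRho ρ σ) (tSigma ρ σ) := by
  obtain ⟨hρ, hσ, hc⟩ := h
  refine ⟨fun i => ?_, fun i => ?_,
    hc.interleave_of_add_eq fun i => (tRho_add_tSigma ρ σ i).symm⟩ <;>
  · have := hρ i
    have := hσ i
    simp only [tRho, tSigma]
    split_ifs <;> omega

lemma biLE_tilde : BiLE ρ σ (tRho ρ σ) (tSigma ρ σ) :=
  biLE_of_add_eq_of_le (fun i => (tRho_add_tSigma ρ σ i).symm) (le_tRho ρ σ)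

lemma biLE_tilde_of_biLE {τ υ : ℕ → ℕ} (hq : QB2 τ υ) (hle : BiLE ρ σ τ υ) :
    BiLE (tRho ρ σ) (tSigma ρ σ) τ υ := by
  intro k
  obtain ⟨m, rfl | rfl⟩ := Nat.even_or_odd' k
  · rw [← psum_interleave_two_mul_eq_of_add_eq fun i => (tRho_add_tSigma ρ σ i).symm]
    exact hle (2 * m)
  · have hsame := psum_interleave_two_mul_eq_of_add_eq
      (fun i => (tRho_add_tSigma ρ σ i).symm) m
    have hprev := hle (2 * m)
    have hodd := hle (2 * m + 1)
    have hnext := hle (2 * m + 1 + 1)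
    simp only [psum_succ, interleave_two_mul, interleave_two_mul_add_one] at hodd hnext ⊢
    have hτυ := hq m
    rw [show tRho ρ σ m = if ρ m + 2 < σ m then (ρ m + σ m + 1) / 2 - 1 else ρ m from rfl]
    split_ifs <;> omega

end Closure

/-- existence, explicit construction, and uniqueness of the
closure `(ρ;σ)~ ∈ Q_n^{B,2}`: it dominates `(ρ;σ)` with the same termwise
sum, and is below every element of `Q_n^{B,2}` dominating `(ρ;σ)`. -/
theorem tilde_closure (n : ℕ) (ρ σ : ℕ → ℕ) (h : IsBipartition n ρ σ) :
    (IsBipartition n (tRho ρ σ) (tSigma ρ σ) ∧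
     QB2 (tRho ρ σ) (tSigma ρ σ) ∧
     BiLE ρ σ (tRho ρ σ) (tSigma ρ σ) ∧
     (∀ i, ρ i + σ i = tRho ρ σ i + tSigma ρ σ i) ∧
     (∀ τ υ : ℕ → ℕ, IsBipartition n τ υ → QB2 τ υ → BiLE ρ σ τ υ →
        BiLE (tRho ρ σ) (tSigma ρ σ) τ υ)) ∧
    (∀ μ ν : ℕ → ℕ, IsBipartition n μ ν → QB2 μ ν → BiLE ρ σ μ ν →
      (∀ i, ρ i + σ i = μ i + ν i) →
      (∀ τ υ : ℕ → ℕ, IsBipartition n τ υ → QB2 τ υ → BiLE ρ σ τ υ →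
        BiLE μ ν τ υ) →
      (∀ i, μ i = tRho ρ σ i) ∧ (∀ i, ν i = tSigma ρ σ i)) := by
  refine ⟨⟨h.tilde, qb2_tilde ρ σ, biLE_tilde, fun i => (tRho_add_tSigma ρ σ i).symm,
    fun τ υ _ hq hle => biLE_tilde_of_biLE hq hle⟩, ?_⟩
  intro μ ν _ hqμ hleμ _ hminμ
  have hle : BiLE μ ν (tRho ρ σ) (tSigma ρ σ) := hminμ _ _ h.tilde (qb2_tilde ρ σ) biLE_tilde
  have hge : BiLE (tRho ρ σ) (tSigma ρ σ) μ ν := biLE_tilde_of_biLE hqμ hleμ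
  obtain ⟨hμ, hν⟩ := interleave_injective (Dominates.antisymm hge hle)
  exact ⟨congrFun hμ, congrFun hν⟩
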